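/- Reciprocal relation for P-polynomials: Let N ≥ 2, ω = e^{2πi/N}, L ≥ 1, v_1,...,v_{m_p} nonzero complex numbers, and P_a, P_b, P_a', P_b' integers with 0 ≤ P_a+P_b ≤ N-1, 0 ≤ P_a'+P_b' ≤ N-1, and P_a' + P_b' ≡ -L - P_a - P_b - 2m_p (mod N). Set v_i' = ω^{-3} v_i^{-1} and let d = ((N-1)L - P_a - P_b - 2m_p - P_a' - P_b')/N (assumed a non-negative integer). Then the rational functions P(t; v_1',...,v_{m_p}') with parameters (P_a',P_b') and P(t; v_1,...,v_{m_p}) with parameters (P_a,P_b) satisfy P(t; v') · ω^{P_b'} ∏_i v_i' = t^{Nd} · P(t^{-1}; v) · ω^{P_b} ∏_i v_i. -/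
import Mathlib


open Finset

noncomputable section

/-- ω = e^{2πi/N}. -/
def omegaN (N : ℕ) : ℂ := Complex.exp (2 * Real.pi * Complex.I / N)

/-- F(t) = ∏_{i=1}^m (1 + ω v_i t), as a rational function of the argument t. -/
def Ffun (N m : ℕ) (v : Fin m → ℂ) (t : RatFunc ℂ) : RatFunc ℂ :=
  ∏ i, (1 + RatFunc.C (omegaN N * v i) * t)

/-- P(t) = ω^{-P_b} ∑_{j=0}^{N-1} (1-t^N)^L (ω^j t)^{-P_a-P_b}
            / ((1-ω^j t)^L F(ω^j t) F(ω^{j+1} t)). -/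
def Pfun (N L m : ℕ) (v : Fin m → ℂ) (Pa Pb : ℤ) (t : RatFunc ℂ) : RatFunc ℂ :=
  RatFunc.C (omegaN N ^ (-Pb)) *
    ∑ j ∈ Finset.range N,
      (1 - t ^ N) ^ L * (RatFunc.C (omegaN N ^ j) * t) ^ (-(Pa + Pb)) /
        ((1 - RatFunc.C (omegaN N ^ j) * t) ^ L * Ffun N m v (RatFunc.C (omegaN N ^ j) * t) *
          Ffun N m v (RatFunc.C (omegaN N ^ (j + 1)) * t))

lemma omegaN_ne_zero (N : ℕ) : omegaN N ≠ 0 := Complex.exp_ne_zero _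

lemma omegaN_pow_N {N : ℕ} (hN : N ≠ 0) : omegaN N ^ N = 1 := by
  rw [omegaN, ← Complex.exp_nat_mul, mul_div_assoc', mul_div_cancel_left₀]
  · exact Complex.exp_two_pi_mul_I
  · exact_mod_cast hN

lemma omegaN_zpow_congr {N : ℕ} (hN : N ≠ 0) {a b : ℤ} (h : (N:ℤ) ∣ a - b) :
    omegaN N ^ a = omegaN N ^ b := by
  obtain ⟨q, hq⟩ := h
  have ha : a = b + N * q := by linarith
  rw [ha, zpow_add₀ (omegaN_ne_zero N), zpow_mul, zpow_natCast, omegaN_pow_N hN, one_zpow, mul_one]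

lemma wmul {N : ℕ} (a b c : ℤ) (h : a + b = c) : omegaN N ^ a * omegaN N ^ b = omegaN N ^ c := by
  rw [← zpow_add₀ (omegaN_ne_zero N), h]

-- flip a factor
lemma factor_flip (α β : ℂ) (h : α * β = 1) :
    (1 + RatFunc.C α * RatFunc.X : RatFunc ℂ)
      = RatFunc.C α * RatFunc.X * (1 + RatFunc.C β * RatFunc.X⁻¹) := by
  have hX : (RatFunc.X : RatFunc ℂ) * RatFunc.X⁻¹ = 1 := mul_inv_cancel₀ RatFunc.X_ne_zero
  rw [mul_add, mul_one]
  have h2 : RatFunc.C α * RatFunc.X * (RatFunc.C β * RatFunc.X⁻¹) = 1 := by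
    rw [mul_mul_mul_comm, ← map_mul, h, map_one, one_mul, hX]
  rw [h2, add_comm]

lemma flip0 {F : Type*} [Field F] (A : F) (hA : A ≠ 0) : 1 - A⁻¹ = -A⁻¹ * (1 - A) := by
  rw [neg_mul, mul_sub, mul_one, inv_mul_cancel₀ hA]
  ring

lemma CX_zpow {N : ℕ} (a z : ℤ) :
    (RatFunc.C (omegaN N ^ a) * RatFunc.X : RatFunc ℂ) ^ z
      = RatFunc.C (omegaN N ^ (a * z)) * RatFunc.X ^ z := by
  rw [mul_zpow, ← map_zpow₀, ← zpow_mul]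

lemma CXinv_zpow {N : ℕ} (a z : ℤ) :
    (RatFunc.C (omegaN N ^ a) * RatFunc.X⁻¹ : RatFunc ℂ) ^ z
      = RatFunc.C (omegaN N ^ (a * z)) * RatFunc.X ^ (-z) := by
  rw [mul_zpow, ← map_zpow₀, ← zpow_mul, inv_zpow, ← zpow_neg]

lemma CXinv_eq {N : ℕ} (a b : ℤ) (h : omegaN N ^ a * omegaN N ^ b = 1) :
    (RatFunc.C (omegaN N ^ b) * RatFunc.X⁻¹ : RatFunc ℂ)
      = (RatFunc.C (omegaN N ^ a) * RatFunc.X)⁻¹ := by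
  rw [mul_inv, ← map_inv₀, ← eq_inv_of_mul_eq_one_right h]

lemma prod_vprime {N : ℕ} (m : ℕ) (v : Fin m → ℂ) :
    (∏ i : Fin m, omegaN N ^ (-3:ℤ) * (v i)⁻¹)
      = omegaN N ^ ((-3) * (m:ℤ)) * (∏ i, v i)⁻¹ := by
  rw [Finset.prod_mul_distrib, Finset.prod_const, Finset.prod_inv_distrib,
    Finset.card_univ, Fintype.card_fin, ← zpow_natCast (omegaN N ^ (-3:ℤ)), ← zpow_mul]

lemma Ffun_transform {N : ℕ} (m : ℕ) (v : Fin m → ℂ) (hv : ∀ i, v i ≠ 0) (a c : ℤ)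
    (h : omegaN N ^ a * omegaN N ^ c = omegaN N) :
    Ffun N m (fun i => omegaN N ^ (-3:ℤ) * (v i)⁻¹) (RatFunc.C (omegaN N ^ a) * RatFunc.X)
      = RatFunc.C (omegaN N ^ ((a - 2) * (m:ℤ)) * (∏ i, v i)⁻¹) * RatFunc.X ^ ((m:ℕ):ℤ)
          * Ffun N m v (RatFunc.C (omegaN N ^ c) * RatFunc.X⁻¹) := by
  have hw := omegaN_ne_zero N
  simp only [Ffun]
  have h' : omegaN N ^ (a + c) = omegaN N ^ (1:ℤ) := by
    rw [← wmul a c (a+c) rfl, h, zpow_one]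
  have key : ∀ i : Fin m,
      (1 + RatFunc.C (omegaN N * (omegaN N ^ (-3:ℤ) * (v i)⁻¹)) * (RatFunc.C (omegaN N ^ a) * RatFunc.X) : RatFunc ℂ)
        = (RatFunc.C (omegaN N ^ (a-2) * (v i)⁻¹) * RatFunc.X)
            * (1 + RatFunc.C (omegaN N * v i) * (RatFunc.C (omegaN N ^ c) * RatFunc.X⁻¹)) := by
    intro i
    have hco : omegaN N * (omegaN N ^ (-3:ℤ) * (v i)⁻¹) * omegaN N ^ a
        = omegaN N ^ (a-2) * (v i)⁻¹ := by
      calc omegaN N * (omegaN N ^ (-3:ℤ) * (v i)⁻¹) * omegaN N ^ a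
          = omegaN N ^ (1:ℤ) * omegaN N ^ (-3:ℤ) * omegaN N ^ a * (v i)⁻¹ := by
            rw [zpow_one]; ring
        _ = omegaN N ^ (a-2) * (v i)⁻¹ := by
            rw [wmul 1 (-3) (-2) (by ring), wmul (-2) a (a-2) (by ring)]
    have h1 : omegaN N ^ (a-2) * omegaN N ^ (1:ℤ) * omegaN N ^ c = 1 := by
      rw [wmul (a-2) 1 (a-1) (by ring), wmul (a-1) c (a+c-1) (by ring),
        show a+c-1 = (a+c) + (-1) by ring, zpow_add₀ hw, h', wmul 1 (-1) 0 (by ring), zpow_zero]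
    have hαβ : (omegaN N ^ (a-2) * (v i)⁻¹) * (omegaN N * v i * omegaN N ^ c) = 1 := by
      calc (omegaN N ^ (a-2) * (v i)⁻¹) * (omegaN N * v i * omegaN N ^ c)
          = (omegaN N ^ (a-2) * omegaN N ^ (1:ℤ) * omegaN N ^ c) * ((v i)⁻¹ * v i) := by
            rw [zpow_one]; ring
        _ = 1 := by rw [h1, inv_mul_cancel₀ (hv i), one_mul]
    calc (1 + RatFunc.C (omegaN N * (omegaN N ^ (-3:ℤ) * (v i)⁻¹)) * (RatFunc.C (omegaN N ^ a) * RatFunc.X) : RatFunc ℂ)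
        = 1 + RatFunc.C (omegaN N ^ (a-2) * (v i)⁻¹) * RatFunc.X := by
          rw [← mul_assoc, ← map_mul, hco]
      _ = (RatFunc.C (omegaN N ^ (a-2) * (v i)⁻¹) * RatFunc.X)
            * (1 + RatFunc.C (omegaN N * v i * omegaN N ^ c) * RatFunc.X⁻¹) := factor_flip _ _ hαβ
      _ = _ := by
          rw [show RatFunc.C (omegaN N * v i * omegaN N ^ c)
              = RatFunc.C (omegaN N * v i) * RatFunc.C (omegaN N ^ c) from map_mul _ _ _,
            mul_assoc (RatFunc.C (omegaN N * v i))]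
  rw [Finset.prod_congr rfl (fun i _ => key i), Finset.prod_mul_distrib, Finset.prod_mul_distrib,
    Finset.prod_const, Finset.card_univ, Fintype.card_fin, ← map_prod]
  congr 2
  rw [Finset.prod_mul_distrib, Finset.prod_const, Finset.prod_inv_distrib, Finset.card_univ,
    Fintype.card_fin, ← zpow_natCast (omegaN N ^ (a-2)), ← zpow_mul]

lemma Lre {F : Type*} [Field F] (a0 g1L a1 xq pL a2 xm a3 g3 g4 : F) :
    a0 * (g1L * (a1 * xq) / ((pL * (a2 * xm * g4)) * (a3 * xm * g3)))
      = (a0 * a1 * (a2 * a3)⁻¹ * (xq * (xm * xm)⁻¹)) * (g1L * (pL * g3 * g4)⁻¹) := by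
  ring

lemma Rre {F : Type*} [Field F] (L : ℕ) (u y : F) (xNd a0 g1 a1 xq p g3 g4 : F) :
    xNd * a0 * ((-u⁻¹ * g1)^L * (a1 * xq) / (((-y⁻¹ * p)^L * g3) * g4))
      = (a0 * a1 * (xNd * xq * (u^L)⁻¹ * y^L)) * (g1^L * (p^L * g3 * g4)⁻¹) := by
  rw [mul_pow, mul_pow, neg_pow u⁻¹, neg_pow y⁻¹, inv_pow u L, inv_pow y L]
  rw [show (-1:F)^L * (u^L)⁻¹ * g1^L * (a1 * xq) = (-1:F)^L * ((u^L)⁻¹ * g1^L * (a1 * xq)) by ring]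
  rw [show ((-1:F)^L * (y^L)⁻¹ * p^L * g3) * g4 = (-1:F)^L * ((y^L)⁻¹ * p^L * g3 * g4) by ring]
  rw [mul_div_mul_left _ _ (pow_ne_zero L (neg_ne_zero.mpr (one_ne_zero : (1:F) ≠ 0)))]
  simp only [div_eq_mul_inv, mul_inv, inv_inv]
  ring

lemma reindex_mem {N : ℕ} (hN : N ≠ 0) (j : ℕ) (hj : j ∈ Finset.range N) :
    (N - j) % N ∈ Finset.range N :=
  Finset.mem_range.mpr (Nat.mod_lt _ (Nat.pos_of_ne_zero hN))

lemma reindex_inv {N : ℕ} (j : ℕ) (hj : j ∈ Finset.range N) :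
    (N - (N - j) % N) % N = j := by
  rw [Finset.mem_range] at hj
  rcases Nat.eq_zero_or_pos j with h0 | h0
  · subst h0; rw [Nat.sub_zero, Nat.mod_self, Nat.sub_zero, Nat.mod_self]
  · have h1 : (N - j) % N = N - j := Nat.mod_eq_of_lt (by omega)
    rw [h1, show N - (N - j) = j by omega, Nat.mod_eq_of_lt hj]

lemma reindex_hjk {N : ℕ} (hN : N ≠ 0) (j : ℕ) (hj : j ∈ Finset.range N) :
    omegaN N ^ (j:ℤ) * omegaN N ^ (((N - j) % N : ℕ):ℤ) = 1 := by
  rw [Finset.mem_range] at hj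
  rw [wmul (j:ℤ) _ ((j:ℤ) + ((N - j) % N : ℕ)) rfl]
  have : (N:ℤ) ∣ ((j:ℤ) + ((N - j) % N : ℕ)) - 0 := by
    rcases Nat.eq_zero_or_pos j with h0 | h0
    · subst h0; simp [Nat.mod_self]
    · rw [Nat.mod_eq_of_lt (by omega)]
      push_cast [Nat.cast_sub (le_of_lt hj)]
      exact ⟨1, by ring⟩
  rw [omegaN_zpow_congr hN this, zpow_zero]

lemma term_eq (N L m : ℕ) (hN : N ≠ 0) (v : Fin m → ℂ) (hv : ∀ i, v i ≠ 0)
    (e f : ℤ) (d : ℕ) (hd : (N:ℤ) * d = ((N:ℤ) - 1) * L - f - 2 * m - e)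
    (j k : ℕ) (hjk : omegaN N ^ (j:ℤ) * omegaN N ^ (k:ℤ) = 1) :
    RatFunc.C (∏ i, omegaN N ^ (-3:ℤ) * (v i)⁻¹) *
      ((1 - RatFunc.X ^ N) ^ L * (RatFunc.C (omegaN N ^ j) * RatFunc.X) ^ (-e) /
        ((1 - RatFunc.C (omegaN N ^ j) * RatFunc.X) ^ L *
          Ffun N m (fun i => omegaN N ^ (-3:ℤ) * (v i)⁻¹) (RatFunc.C (omegaN N ^ j) * RatFunc.X) *
          Ffun N m (fun i => omegaN N ^ (-3:ℤ) * (v i)⁻¹) (RatFunc.C (omegaN N ^ (j+1)) * RatFunc.X)))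
    = (RatFunc.X ^ (N * d) * RatFunc.C (∏ i, v i)) *
      ((1 - RatFunc.X⁻¹ ^ N) ^ L * (RatFunc.C (omegaN N ^ k) * RatFunc.X⁻¹) ^ (-f) /
        ((1 - RatFunc.C (omegaN N ^ k) * RatFunc.X⁻¹) ^ L *
          Ffun N m v (RatFunc.C (omegaN N ^ k) * RatFunc.X⁻¹) *
          Ffun N m v (RatFunc.C (omegaN N ^ (k+1)) * RatFunc.X⁻¹))) := by
  have hw := omegaN_ne_zero N
  have hX : (RatFunc.X : RatFunc ℂ) ≠ 0 := RatFunc.X_ne_zero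
  have hY : RatFunc.C (omegaN N ^ (j:ℤ)) * RatFunc.X ≠ 0 :=
    mul_ne_zero (by simpa using zpow_ne_zero (j:ℤ) hw) hX
  simp only [← zpow_natCast (omegaN N), Nat.cast_add, Nat.cast_one]
  have h1 : omegaN N ^ (j:ℤ) * omegaN N ^ ((k:ℤ)+1) = omegaN N := by
    rw [show ((k:ℤ)+1) = 1 + (k:ℤ) by ring, ← wmul 1 (k:ℤ) (1+(k:ℤ)) rfl, ← mul_assoc,
      mul_comm (omegaN N ^ (j:ℤ)) (omegaN N ^ (1:ℤ)), mul_assoc, hjk, mul_one, zpow_one]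
  have h2 : omegaN N ^ ((j:ℤ)+1) * omegaN N ^ (k:ℤ) = omegaN N := by
    rw [← wmul (j:ℤ) 1 ((j:ℤ)+1) rfl, mul_assoc, mul_comm (omegaN N ^ (1:ℤ)), ← mul_assoc,
      hjk, one_mul, zpow_one]
  rw [Ffun_transform m v hv (j:ℤ) ((k:ℤ)+1) h1, Ffun_transform m v hv ((j:ℤ)+1) (k:ℤ) h2]
  rw [CX_zpow (j:ℤ) (-e), CXinv_zpow (k:ℤ) (-f)]
  rw [show (1 - RatFunc.X⁻¹ ^ N : RatFunc ℂ) = -(RatFunc.X ^ N)⁻¹ * (1 - RatFunc.X ^ N) from by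
    rw [inv_pow]; exact flip0 _ (pow_ne_zero _ hX)]
  rw [show (1 - RatFunc.C (omegaN N ^ (k:ℤ)) * RatFunc.X⁻¹ : RatFunc ℂ)
      = -(RatFunc.C (omegaN N ^ (j:ℤ)) * RatFunc.X)⁻¹ * (1 - RatFunc.C (omegaN N ^ (j:ℤ)) * RatFunc.X) from by
    rw [CXinv_eq (j:ℤ) (k:ℤ) hjk]; exact flip0 _ hY]
  rw [Lre, Rre]
  congr 1
  have hk : omegaN N ^ ((k:ℤ) * -f) = omegaN N ^ ((j:ℤ) * f) := by
    rw [zpow_mul, zpow_mul, eq_inv_of_mul_eq_one_right hjk, inv_zpow, ← zpow_neg, neg_neg]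
  rw [hk, mul_pow, ← map_pow, ← zpow_natCast (omegaN N ^ ((j:ℤ))) L, ← zpow_mul,
    ← zpow_natCast RatFunc.X L, ← pow_mul, ← zpow_natCast RatFunc.X (N*d),
    ← zpow_natCast RatFunc.X (N*L)]
  rw [show RatFunc.C (∏ i, v i) * RatFunc.C (omegaN N ^ ((j:ℤ) * f)) *
      (RatFunc.X ^ ((N*d : ℕ):ℤ) * RatFunc.X ^ (- -f) * (RatFunc.X ^ ((N*L : ℕ):ℤ))⁻¹ *
        (RatFunc.C (omegaN N ^ ((j:ℤ) * (L:ℤ))) * RatFunc.X ^ ((L : ℕ):ℤ)))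
      = RatFunc.C (∏ i, v i) * RatFunc.C (omegaN N ^ ((j:ℤ) * f)) * RatFunc.C (omegaN N ^ ((j:ℤ) * (L:ℤ))) *
        (RatFunc.X ^ ((N*d : ℕ):ℤ) * RatFunc.X ^ (- -f) * (RatFunc.X ^ ((N*L : ℕ):ℤ))⁻¹ *
          RatFunc.X ^ ((L : ℕ):ℤ)) from by ring]
  simp only [← map_mul, ← map_inv₀, ← zpow_neg, ← zpow_add₀ hX]
  have hP : (∏ i, v i) ≠ 0 := Finset.prod_ne_zero_iff.mpr (fun i _ => hv i)
  congr 1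
  · congr 1
    rw [prod_vprime m v]
    rw [show omegaN N ^ (((j:ℤ)-2)*(m:ℤ)) * (∏ i, v i)⁻¹ * (omegaN N ^ (((j:ℤ)+1-2)*(m:ℤ)) * (∏ i, v i)⁻¹)
        = omegaN N ^ (((j:ℤ)-2)*(m:ℤ)) * omegaN N ^ (((j:ℤ)+1-2)*(m:ℤ)) * ((∏ i, v i)⁻¹ * (∏ i, v i)⁻¹) from by ring]
    rw [wmul (((j:ℤ)-2)*(m:ℤ)) (((j:ℤ)+1-2)*(m:ℤ)) ((2*(j:ℤ)-3)*(m:ℤ)) (by ring)]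
    simp only [mul_inv, inv_inv, ← zpow_neg]
    rw [show omegaN N ^ (-3 * (m:ℤ)) * (∏ i, v i)⁻¹ * omegaN N ^ ((j:ℤ) * -e) *
        (omegaN N ^ (-((2 * (j:ℤ) - 3) * (m:ℤ))) * ((∏ i, v i) * ∏ i, v i))
        = (omegaN N ^ (-3 * (m:ℤ)) * omegaN N ^ ((j:ℤ) * -e) * omegaN N ^ (-((2 * (j:ℤ) - 3) * (m:ℤ))))
          * ((∏ i, v i)⁻¹ * (∏ i, v i) * (∏ i, v i)) from by ring]
    rw [inv_mul_cancel₀ hP, one_mul]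
    rw [wmul (-3 * (m:ℤ)) ((j:ℤ) * -e) (-3 * (m:ℤ) + (j:ℤ) * -e) rfl,
      wmul (-3 * (m:ℤ) + (j:ℤ) * -e) (-((2 * (j:ℤ) - 3) * (m:ℤ)))
        (-((j:ℤ) * e) - 2 * (j:ℤ) * (m:ℤ)) (by ring)]
    rw [omegaN_zpow_congr hN (show (N:ℤ) ∣ (-((j:ℤ) * e) - 2 * (j:ℤ) * (m:ℤ)) - ((j:ℤ) * f + (j:ℤ) * (L:ℤ))
        from ⟨(j:ℤ) * ((d:ℤ) - (L:ℤ)), by push_cast; linear_combination (-(j:ℤ)) * hd⟩)]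
    rw [mul_comm, mul_assoc, wmul ((j:ℤ) * f) ((j:ℤ) * (L:ℤ)) ((j:ℤ) * f + (j:ℤ) * (L:ℤ)) rfl]
  · congr 1
    push_cast
    linear_combination -hd


/-- Reciprocal relation for P-polynomials:
`P(t; v') ω^{P_b'} ∏ v_i' = t^{Nd} P(t^{-1}; v) ω^{P_b} ∏ v_i`,
where `v_i' = ω^{-3} v_i^{-1}`. -/
theorem Pfun_reciprocal (N : ℕ) (hN : 2 ≤ N) (L : ℕ) (hL : 1 ≤ L) (m : ℕ) (v : Fin m → ℂ)
    (hv : ∀ i, v i ≠ 0) (Pa Pb Pa' Pb' : ℤ)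
    (hPab : 0 ≤ Pa + Pb ∧ Pa + Pb ≤ (N : ℤ) - 1)
    (hPab' : 0 ≤ Pa' + Pb' ∧ Pa' + Pb' ≤ (N : ℤ) - 1)
    (hcong : Pa' + Pb' ≡ -(L : ℤ) - Pa - Pb - 2 * m [ZMOD N])
    (d : ℕ)
    (hd : (N : ℤ) * d = ((N : ℤ) - 1) * L - Pa - Pb - 2 * m - Pa' - Pb') :
    Pfun N L m (fun i => omegaN N ^ (-3 : ℤ) * (v i)⁻¹) Pa' Pb' RatFunc.X *
        RatFunc.C (omegaN N ^ Pb' * ∏ i, omegaN N ^ (-3 : ℤ) * (v i)⁻¹)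
      = RatFunc.X ^ (N * d) * Pfun N L m v Pa Pb (RatFunc.X⁻¹) *
          RatFunc.C (omegaN N ^ Pb * ∏ i, v i) := by
  have hN0 : N ≠ 0 := by omega
  have hw := omegaN_ne_zero N
  have hd' : (N:ℤ) * d = ((N:ℤ) - 1) * L - (Pa + Pb) - 2 * m - (Pa' + Pb') := by linarith
  rw [Pfun, Pfun]
  have hL1 : ∀ S : RatFunc ℂ,
      RatFunc.C (omegaN N ^ (-Pb')) * S * RatFunc.C (omegaN N ^ Pb' * ∏ i, omegaN N ^ (-3:ℤ) * (v i)⁻¹)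
        = RatFunc.C (∏ i, omegaN N ^ (-3:ℤ) * (v i)⁻¹) * S := by
    intro S
    rw [mul_comm, ← mul_assoc, ← map_mul, mul_comm (omegaN N ^ Pb' * ∏ i, omegaN N ^ (-3:ℤ) * (v i)⁻¹),
      ← mul_assoc, wmul (-Pb') Pb' 0 (by ring), zpow_zero, one_mul]
  have hR1 : ∀ S : RatFunc ℂ,
      RatFunc.X ^ (N*d) * (RatFunc.C (omegaN N ^ (-Pb)) * S) * RatFunc.C (omegaN N ^ Pb * ∏ i, v i)
        = (RatFunc.X ^ (N*d) * RatFunc.C (∏ i, v i)) * S := by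
    intro S
    rw [show RatFunc.X ^ (N*d) * (RatFunc.C (omegaN N ^ (-Pb)) * S) * RatFunc.C (omegaN N ^ Pb * ∏ i, v i)
        = (RatFunc.X ^ (N*d) * (RatFunc.C (omegaN N ^ (-Pb)) * RatFunc.C (omegaN N ^ Pb * ∏ i, v i))) * S
        from by ring, ← map_mul, ← mul_assoc, wmul (-Pb) Pb 0 (by ring), zpow_zero, one_mul]
  rw [hL1, hR1, Finset.mul_sum, Finset.mul_sum]
  exact Finset.sum_nbij' (fun j => (N-j)%N) (fun j => (N-j)%N)
    (reindex_mem hN0) (reindex_mem hN0) reindex_inv reindex_inv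
    (fun j hj => term_eq N L m hN0 v hv (Pa'+Pb') (Pa+Pb) d hd' j ((N-j)%N) (reindex_hjk hN0 j hj))

end
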